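/- arXiv:math/0601101 — 2 statements merged into one kernel-verified Lean document; each statement's English description precedes it below -/
import Mathlib

section
/- Let J = (J_0, …, J_s) be a list of subsets of G. Then reg(J) = reg^0(J) ∩ reg^1(J). -/
open Set Pointwise

/-- The submonoid `ℕC ⊆ G` generated by the list `C = {c 1, …, c l}`. -/
def NCmod {G : Type*} [AddCommGroup G] {l : ℕ} (c : Fin l → G) : Set G :=
  (AddSubmonoid.closure (Set.range c) : AddSubmonoid G)

/-- The region `ℕC[k] = ⋃ { sign(k)·(w₁c₁ + ⋯ + w_lc_l) + ℕC : w ∈ ℕ^l, ∑ w = |k| }`. -/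
def NCk {G : Type*} [AddCommGroup G] {l : ℕ} (c : Fin l → G) (k : ℤ) : Set G :=
  ⋃ (w : Fin l → ℕ) (_ : ∑ j, w j = k.natAbs),
    (k.sign • ∑ j, (w j : ℤ) • c j) +ᵥ NCmod c

/-- `reg^i(J) = { m ∈ G : m + ℕC[1−i] ⊆ ⋂_{p=0}^{s} ⋂_{d ∈ J_p} ( d + R + ℕC[1−i−p] ) }`. -/
def regIdx {G : Type*} [AddCommGroup G] {l s : ℕ} (c : Fin l → G) (R : Set G)
    (J : Fin (s + 1) → Set G) (i : ℕ) : Set G :=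
  {m | m +ᵥ NCk c (1 - (i : ℤ)) ⊆
    ⋂ (p : Fin (s + 1)), ⋂ d ∈ J p, d +ᵥ (R + NCk c (1 - (i : ℤ) - ((p : ℕ) : ℤ)))}

/-- `reg(J) = ⋂_{i ≥ 0} reg^i(J)`. -/
def regJ {G : Type*} [AddCommGroup G] {l s : ℕ} (c : Fin l → G) (R : Set G)
    (J : Fin (s + 1) → Set G) : Set G :=
  ⋂ i : ℕ, regIdx c R J i

lemma mem_NCk_neg {G : Type*} [AddCommGroup G] {l : ℕ} (c : Fin l → G) (p : ℕ) (x : G) :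
    x ∈ NCk c (-(p : ℤ)) ↔
      ∃ w : Fin l → ℕ, (∑ j, w j) = p ∧ ∃ n ∈ NCmod c,
        x = -(∑ j, (w j : ℤ) • c j) + n := by
  unfold NCk
  simp only [Set.mem_iUnion, Set.mem_vadd_set]
  constructor
  · rintro ⟨w, hw, n, hn, rfl⟩
    rw [Int.natAbs_neg, Int.natAbs_natCast] at hw
    refine ⟨w, hw, n, hn, ?_⟩
    rcases Nat.eq_zero_or_pos p with hp | hp
    · subst hp
      have : ∀ j, w j = 0 := by
        intro j
        exact Finset.sum_eq_zero_iff.mp hw j (Finset.mem_univ j)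
      simp [this]
    · have : (-(p:ℤ)).sign = -1 := by
        rw [Int.sign_eq_neg_one_iff_neg]; exact_mod_cast Int.neg_neg_of_pos (by exact_mod_cast hp)
      rw [this]; simp [vadd_eq_add]
  · rintro ⟨w, hw, n, hn, rfl⟩
    refine ⟨w, by rw [Int.natAbs_neg, Int.natAbs_natCast]; exact hw, n, hn, ?_⟩
    rcases Nat.eq_zero_or_pos p with hp | hp
    · subst hp
      have : ∀ j, w j = 0 := fun j => Finset.sum_eq_zero_iff.mp hw j (Finset.mem_univ j)
      simp [this]
    · have : (-(p:ℤ)).sign = -1 := by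
        rw [Int.sign_eq_neg_one_iff_neg]; exact_mod_cast Int.neg_neg_of_pos (by exact_mod_cast hp)
      rw [this]; simp [vadd_eq_add]

lemma NCmod_subset_NCk_zero {G : Type*} [AddCommGroup G] {l : ℕ} (c : Fin l → G) :
    NCmod c ⊆ NCk c 0 := by
  intro n hn
  have := (mem_NCk_neg c 0 n).mpr ⟨0, by simp, n, hn, by simp⟩
  simpa using this

lemma sub_mem_NCk {G : Type*} [AddCommGroup G] {l : ℕ} (c : Fin l → G) {p : ℕ} {t : G}
    (ht : t ∈ NCk c (-(p : ℤ))) (w : Fin l → ℕ) :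
    t - ∑ j, (w j : ℤ) • c j ∈ NCk c (-((p + ∑ j, w j : ℕ) : ℤ)) := by
  obtain ⟨v, hv, n, hn, rfl⟩ := (mem_NCk_neg c p t).mp ht
  refine (mem_NCk_neg c _ _).mpr ⟨v + w, by simp [Finset.sum_add_distrib, hv], n, hn, ?_⟩
  simp only [Pi.add_apply, Nat.cast_add, add_smul, Finset.sum_add_distrib]
  abel

theorem regJ_eq_reg0_inter_reg1 {G : Type*} [AddCommGroup G] {l s : ℕ}
    (c : Fin l → G) (R : Set G) (J : Fin (s + 1) → Set G) :
    regJ c R J = regIdx c R J 0 ∩ regIdx c R J 1 := by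
  ext m
  simp only [regJ, Set.mem_iInter, Set.mem_inter_iff]
  constructor
  · exact fun h => ⟨h 0, h 1⟩
  · rintro ⟨h0, h1⟩ i
    match i with
    | 0 => exact h0
    | 1 => exact h1
    | (k + 2) =>
      intro x hx
      obtain ⟨y, hy, rfl⟩ := hx
      have hy' : y ∈ NCk c (-((k + 1 : ℕ) : ℤ)) := by
        have : (1 - ((k + 2 : ℕ) : ℤ)) = -((k + 1 : ℕ) : ℤ) := by push_cast; ring
        rwa [this] at hy
      obtain ⟨w, hw, n, hn, rfl⟩ := (mem_NCk_neg c _ _).mp hy'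
      have hmn : m + n ∈ ⋂ (p : Fin (s + 1)), ⋂ d ∈ J p,
          d +ᵥ (R + NCk c (1 - ((1:ℕ) : ℤ) - ((p : ℕ) : ℤ))) :=
        h1 ⟨n, by simpa using NCmod_subset_NCk_zero c hn, rfl⟩
      simp only [Set.mem_iInter] at hmn ⊢
      intro p d hd
      obtain ⟨u, hu, heq⟩ := hmn p d hd
      obtain ⟨r, hr, t, ht, rfl⟩ := hu
      have ht' : t ∈ NCk c (-((p : ℕ) : ℤ)) := by
        have : (1 - ((1:ℕ) : ℤ) - ((p : ℕ) : ℤ)) = -((p : ℕ) : ℤ) := by push_cast; ring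
        rwa [this] at ht
      have key := sub_mem_NCk c ht' w
      rw [hw] at key
      refine ⟨r + (t - ∑ j, (w j : ℤ) • c j), ⟨r, hr, _, ?_, rfl⟩, ?_⟩
      · have : (1 - ((k + 2 : ℕ) : ℤ) - ((p : ℕ) : ℤ)) = -(((p : ℕ) + (k + 1) : ℕ) : ℤ) := by
          push_cast; ring
        rwa [this]
      · simp only [vadd_eq_add] at heq ⊢
        have h2 : d + (r + (t - ∑ j, (w j : ℤ) • c j)) =
            (d + (r + t)) + (-(∑ j, (w j : ℤ) • c j)) := by abel
        rw [h2, heq]; abel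
end

section
/- Suppose v·c_j ≥ 0 for all 1 ≤ j ≤ l. Let m ∈ ℤ^r, let k, i be integers, and set m(k,i) = max_{1≤j≤l} v·c_j if k − i < 0 and m(k,i) = min_{1≤j≤l} v·c_j if k − i ≥ 0. Let Z ⊆ ℤ^r be any subset containing the half-plane { d ∈ ℤ^r : v·d ≥ v·m + (k−i)·m(k,i) }. Then m + ℕC[k−i] ⊆ Z. -/
open Set Pointwise

/-- The dot product `v · x` of `v ∈ ℝ^r` with `x ∈ ℤ^r`. -/
def dotR {r : ℕ} (v : Fin r → ℝ) (x : Fin r → ℤ) : ℝ :=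
  ∑ i, v i * (x i : ℝ)

/-! A point of `ℕC[n]` is `sign n • ∑ w j • c j + s` with `∑ w j = |n|` and `s ∈ ℕC`.
The functional `v · -` is nonnegative on `ℕC` because it is on the generators, and on the
shift it is at least `|n| * min = n * min` when `n ≥ 0` and at least `-(|n| * max) = n * max`
when `n < 0`. -/

def dotRAddHom {r : ℕ} (v : Fin r → ℝ) : (Fin r → ℤ) →+ ℝ where
  toFun := dotR v
  map_zero' := by simp [dotR]
  map_add' x y := by simp [dotR, mul_add, Finset.sum_add_distrib]

@[simp]
lemma dotRAddHom_apply {r : ℕ} (v : Fin r → ℝ) (x : Fin r → ℤ) :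
    dotRAddHom v x = dotR v x :=
  rfl

lemma nsmul_le_sum_nsmul {ι M : Type*} [AddCommMonoid M] [PartialOrder M]
    [IsOrderedAddMonoid M] {s : Finset ι} {w : ι → ℕ} {g : ι → M} {a : M}
    (h : ∀ j ∈ s, a ≤ g j) : (∑ j ∈ s, w j) • a ≤ ∑ j ∈ s, w j • g j := by
  rw [Finset.sum_smul]
  exact Finset.sum_le_sum fun j hj => nsmul_le_nsmul_right (h j hj) _

lemma sum_nsmul_le_nsmul {ι M : Type*} [AddCommMonoid M] [PartialOrder M]
    [IsOrderedAddMonoid M] {s : Finset ι} {w : ι → ℕ} {g : ι → M} {a : M}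
    (h : ∀ j ∈ s, g j ≤ a) : ∑ j ∈ s, w j • g j ≤ (∑ j ∈ s, w j) • a := by
  rw [Finset.sum_smul]
  exact Finset.sum_le_sum fun j hj => nsmul_le_nsmul_right (h j hj) _

section NCk

variable {G : Type*} [AddCommGroup G] {l : ℕ} {c : Fin l → G} (f : G →+ ℝ)

lemma apply_nonneg_of_mem_NCmod (hc : ∀ j, 0 ≤ f (c j)) {s : G} (hs : s ∈ NCmod c) :
    0 ≤ f s := by
  have hle : AddSubmonoid.closure (range c) ≤ (AddSubmonoid.nonneg ℝ).comap f :=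
    AddSubmonoid.closure_le.2 <| range_subset_iff.2 hc
  exact hle hs

lemma apply_sum_nsmul (w : Fin l → ℕ) :
    f (∑ j, (w j : ℤ) • c j) = ∑ j, w j • f (c j) := by
  simp [map_sum, natCast_zsmul]

lemma mul_le_apply_sign_smul_sum {mn mx : ℝ}
    (hmn : mn ∈ lowerBounds (range fun j => f (c j)))
    (hmx : mx ∈ upperBounds (range fun j => f (c j))) {n : ℤ} {w : Fin l → ℕ}
    (hw : ∑ j, w j = n.natAbs) :
    n * (if n < 0 then mx else mn) ≤ f (n.sign • ∑ j, (w j : ℤ) • c j) := by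
  rw [map_zsmul, apply_sum_nsmul]
  rcases lt_trichotomy n 0 with hneg | rfl | hpos
  · have hle := sum_nsmul_le_nsmul (s := Finset.univ) (w := w) fun j _ => hmx ⟨j, rfl⟩
    rw [hw, nsmul_eq_mul, Nat.cast_natAbs, abs_of_neg hneg] at hle
    rw [if_pos hneg, Int.sign_eq_neg_one_of_neg hneg, neg_one_zsmul]
    push_cast at hle
    linarith
  · simp
  · have hle := nsmul_le_sum_nsmul (s := Finset.univ) (w := w) fun j _ => hmn ⟨j, rfl⟩
    rw [hw, nsmul_eq_mul, Nat.cast_natAbs, abs_of_pos hpos] at hle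
    rwa [if_neg hpos.not_gt, Int.sign_eq_one_of_pos hpos, one_zsmul]

lemma mul_le_apply_of_mem_NCk (hc : ∀ j, 0 ≤ f (c j)) {mn mx : ℝ}
    (hmn : mn ∈ lowerBounds (range fun j => f (c j)))
    (hmx : mx ∈ upperBounds (range fun j => f (c j))) {n : ℤ} {y : G} (hy : y ∈ NCk c n) :
    n * (if n < 0 then mx else mn) ≤ f y := by
  simp only [NCk, mem_iUnion] at hy
  obtain ⟨w, hw, s, hs, rfl⟩ := hy
  dsimp only
  rw [vadd_eq_add, map_add]
  linarith [mul_le_apply_sign_smul_sum f hmn hmx hw, apply_nonneg_of_mem_NCmod f hc hs]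

end NCk

theorem vadd_NCk_subset_of_halfplane_subset_general {r l : ℕ}
    (c : Fin l → (Fin r → ℤ)) (v : Fin r → ℝ)
    (hv : ∀ j, 0 ≤ dotR v (c j))
    (mn mx : ℝ)
    (hmn : IsLeast (Set.range fun j => dotR v (c j)) mn)
    (hmx : IsGreatest (Set.range fun j => dotR v (c j)) mx)
    (m : Fin r → ℤ) (k i : ℤ) (Z : Set (Fin r → ℤ))
    (hZ : {d : Fin r → ℤ |
        dotR v m + ((k - i : ℤ) : ℝ) * (if k - i < 0 then mx else mn) ≤ dotR v d} ⊆ Z) :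
    m +ᵥ NCk c (k - i) ⊆ Z := by
  rintro _ ⟨y, hy, rfl⟩
  apply hZ
  have hy_bound := mul_le_apply_of_mem_NCk (dotRAddHom v) hv hmn.2 hmx.2 hy
  simp only [mem_ofPred_eq, vadd_eq_add, ← dotRAddHom_apply, map_add]
  exact add_le_add_right hy_bound _

theorem vadd_NCk_subset_of_halfplane_subset {r l : ℕ} (hl : 0 < l)
    (c : Fin l → (Fin r → ℤ)) (v : Fin r → ℝ)
    (hv : ∀ j, 0 ≤ dotR v (c j))
    (mn mx : ℝ)
    (hmn : IsLeast (Set.range fun j => dotR v (c j)) mn)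
    (hmx : IsGreatest (Set.range fun j => dotR v (c j)) mx)
    (m : Fin r → ℤ) (k i : ℤ) (Z : Set (Fin r → ℤ))
    (hZ : {d : Fin r → ℤ |
        dotR v m + ((k - i : ℤ) : ℝ) * (if k - i < 0 then mx else mn) ≤ dotR v d} ⊆ Z) :
    m +ᵥ NCk c (k - i) ⊆ Z :=
  vadd_NCk_subset_of_halfplane_subset_general c v hv mn mx hmn hmx m k i Z hZ
end
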